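/- arXiv:1508.02628 — 5 statements merged into one kernel-verified Lean document; each statement's English description precedes it below -/
import Mathlib

section
/- Let λ₁, λ₂, λ₃, μ₁, μ₂, μ₃ be real numbers, ε, ε̃ ∈ {-1,1}, and c ≠ c̃ real numbers satisfying c + ε·λᵢ·λⱼ = c̃ + ε̃·μᵢ·μⱼ for all 1 ≤ i ≠ j ≤ 3. If λ₁ = λ₂ =: λ, then either μ₃ = 0 (in which case c - c̃ + ε·λ·λ₃ = 0 and c - c̃ + ε·λ² = ε̃·μ₁·μ₂) or μ₁ = μ₂ =: μ (in which case c - c̃ + ε·λ² = ε̃·μ² and c - c̃ + ε·λ·λ₃ = ε̃·μ·μ₃). -/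
/-! Subtracting the Gauss equations for the pairs (1,3) and (2,3) and using `λ₁ = λ₂` gives
`ε̃ μ₃ (μ₁ - μ₂) = 0`; since `ε̃ ≠ 0`, either `μ₃ = 0` or `μ₁ = μ₂`, and in each case the
remaining identities are the Gauss equations themselves. -/

theorem eq_zero_or_eq_of_mul_mul_eq_mul_mul {M₀ : Type*} [MonoidWithZero M₀] [IsCancelMulZero M₀]
    {a x z y : M₀} (ha : a ≠ 0) (h : a * x * y = a * z * y) : y = 0 ∨ x = z :=
  (mul_eq_mul_right_iff.mp (mul_left_cancel₀ ha (by simpa only [mul_assoc] using h))).symm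

theorem stmt_7_general (l₁ l₂ l₃ m₁ m₂ m₃ ε εt c ct : ℝ)
    (hεt : εt = 1 ∨ εt = -1)
    (h₁₂ : c + ε * l₁ * l₂ = ct + εt * m₁ * m₂)
    (h₁₃ : c + ε * l₁ * l₃ = ct + εt * m₁ * m₃)
    (h₂₃ : c + ε * l₂ * l₃ = ct + εt * m₂ * m₃)
    (hl : l₁ = l₂) :
    (m₃ = 0 ∧ c - ct + ε * l₁ * l₃ = 0 ∧ c - ct + ε * l₁ ^ 2 = εt * m₁ * m₂) ∨
    (m₁ = m₂ ∧ c - ct + ε * l₁ ^ 2 = εt * m₁ ^ 2 ∧ c - ct + ε * l₁ * l₃ = εt * m₁ * m₃) := by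
  subst hl
  have hεt₀ : εt ≠ 0 := by rcases hεt with rfl | rfl <;> norm_num
  have hm : εt * m₁ * m₃ = εt * m₂ * m₃ := by linarith
  rcases eq_zero_or_eq_of_mul_mul_eq_mul_mul hεt₀ hm with hm₃ | rfl
  · exact Or.inl ⟨hm₃, by linear_combination h₁₃ + εt * m₁ * hm₃, by linear_combination h₁₂⟩
  · exact Or.inr ⟨rfl, by linear_combination h₁₂, by linear_combination h₁₃⟩

/-- Lemma 3.2(a) algebraic content: if `c + ε λᵢ λⱼ = c̃ + ε̃ μᵢ μⱼ` for all `i ≠ j`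
and `λ₁ = λ₂ = λ`, then either `μ₃ = 0` (with `c - c̃ + ε λ λ₃ = 0` and
`c - c̃ + ε λ² = ε̃ μ₁ μ₂`) or `μ₁ = μ₂ = μ` (with `c - c̃ + ε λ² = ε̃ μ²` and
`c - c̃ + ε λ λ₃ = ε̃ μ μ₃`). -/
theorem stmt_7 (l₁ l₂ l₃ m₁ m₂ m₃ ε εt c ct : ℝ)
    (hε : ε = 1 ∨ ε = -1) (hεt : εt = 1 ∨ εt = -1) (hc : c ≠ ct)
    (h₁₂ : c + ε * l₁ * l₂ = ct + εt * m₁ * m₂)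
    (h₁₃ : c + ε * l₁ * l₃ = ct + εt * m₁ * m₃)
    (h₂₃ : c + ε * l₂ * l₃ = ct + εt * m₂ * m₃)
    (hl : l₁ = l₂) :
    (m₃ = 0 ∧ c - ct + ε * l₁ * l₃ = 0 ∧ c - ct + ε * l₁ ^ 2 = εt * m₁ * m₂) ∨
    (m₁ = m₂ ∧ c - ct + ε * l₁ ^ 2 = εt * m₁ ^ 2 ∧ c - ct + ε * l₁ * l₃ = εt * m₁ * m₃) :=
  stmt_7_general l₁ l₂ l₃ m₁ m₂ m₃ ε εt c ct hεt h₁₂ h₁₃ h₂₃ hl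
end

section
/- Let λ₁, λ₂, λ₃, μ₁, μ₂, μ₃ be real numbers, ε, ε̃ ∈ {-1,1}, and c ≠ c̃ real numbers satisfying c + ε·λᵢ·λⱼ = c̃ + ε̃·μᵢ·μⱼ for all 1 ≤ i ≠ j ≤ 3. If λ₃ = 0, then μ₁ = μ₂ =: μ, and c - c̃ + ε·λ₁·λ₂ = ε̃·μ² and c - c̃ = ε̃·μ·μ₃. -/
theorem stmt_8_general (l₁ l₂ l₃ m₁ m₂ m₃ ε εt c ct : ℝ)
    (hc : c ≠ ct)
    (h₁₂ : c + ε * l₁ * l₂ = ct + εt * m₁ * m₂)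
    (h₁₃ : c + ε * l₁ * l₃ = ct + εt * m₁ * m₃)
    (h₂₃ : c + ε * l₂ * l₃ = ct + εt * m₂ * m₃)
    (hl : l₃ = 0) :
    m₁ = m₂ ∧ c - ct + ε * l₁ * l₂ = εt * m₁ ^ 2 ∧ c - ct = εt * m₁ * m₃ := by
  subst hl
  have h₁ : c - ct = εt * m₃ * m₁ := by linear_combination h₁₃
  have h₂ : c - ct = εt * m₃ * m₂ := by linear_combination h₂₃
  have hm : m₁ = m₂ :=
    mul_left_cancel₀ (left_ne_zero_of_mul (h₁ ▸ sub_ne_zero.2 hc)) (h₁.symm.trans h₂)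
  exact ⟨hm, by linear_combination h₁₂ - εt * m₁ * hm, by linear_combination h₁⟩

/-- Lemma 3.2(b) algebraic content: if `c + ε λᵢ λⱼ = c̃ + ε̃ μᵢ μⱼ` for all `i ≠ j`
and `λ₃ = 0`, then `μ₁ = μ₂ = μ`, `c - c̃ + ε λ₁ λ₂ = ε̃ μ²` and `c - c̃ = ε̃ μ μ₃`. -/
theorem stmt_8 (l₁ l₂ l₃ m₁ m₂ m₃ ε εt c ct : ℝ)
    (hε : ε = 1 ∨ ε = -1) (hεt : εt = 1 ∨ εt = -1) (hc : c ≠ ct)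
    (h₁₂ : c + ε * l₁ * l₂ = ct + εt * m₁ * m₂)
    (h₁₃ : c + ε * l₁ * l₃ = ct + εt * m₁ * m₃)
    (h₂₃ : c + ε * l₂ * l₃ = ct + εt * m₂ * m₃)
    (hl : l₃ = 0) :
    m₁ = m₂ ∧ c - ct + ε * l₁ * l₂ = εt * m₁ ^ 2 ∧ c - ct = εt * m₁ * m₃ :=
  stmt_8_general l₁ l₂ l₃ m₁ m₂ m₃ ε εt c ct hc h₁₂ h₁₃ h₂₃ hl
end

section
/- Let λ₁, λ₂, λ₃ be reals with λ₁ = λ₂ =: λ, let ε = 1, and suppose μ₁, μ₂, μ₃ and ε̃ = -1 (Lorentzian target) satisfy c + ελᵢλⱼ = c̃ + ε̃μᵢμⱼ for all i ≠ j, i.e. c + λᵢλⱼ = c̃ - μᵢμⱼ for all i ≠ j. If c > c̃, then necessarily μ₃ = 0, c - c̃ + λλ₃ = 0 and c - c̃ + λ² = -μ₁μ₂; in particular λ ≠ 0 and μ₁μ₂ ≠ 0. -/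
/-- Sign analysis in Lemma 3.2(a): with `ε = 1`, Lorentzian target (`ε̃ = -1`, so the
Gauss compatibility reads `c + λᵢ λⱼ = c̃ - μᵢ μⱼ`), `λ₁ = λ₂ = λ` and `c > c̃`, one must
have `μ₃ = 0`, `c - c̃ + λ λ₃ = 0` and `c - c̃ + λ² = -μ₁ μ₂`; in particular `λ ≠ 0`
and `μ₁ μ₂ ≠ 0`. -/
theorem stmt_9 (l₁ l₂ l₃ m₁ m₂ m₃ c ct : ℝ) (hc : c > ct)
    (h₁₂ : c + l₁ * l₂ = ct - m₁ * m₂)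
    (h₁₃ : c + l₁ * l₃ = ct - m₁ * m₃)
    (h₂₃ : c + l₂ * l₃ = ct - m₂ * m₃)
    (hl : l₁ = l₂) :
    m₃ = 0 ∧ c - ct + l₁ * l₃ = 0 ∧ c - ct + l₁ ^ 2 = -(m₁ * m₂) ∧
      l₁ ≠ 0 ∧ m₁ * m₂ ≠ 0 := by
  subst hl
  have key : (m₁ - m₂) * m₃ = 0 := by nlinarith [h₁₃, h₂₃]
  have hm3 : m₃ = 0 := by
    rcases mul_eq_zero.1 key with h | h
    · have hm : m₁ = m₂ := by linarith
      subst hm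
      nlinarith [sq_nonneg m₁, sq_nonneg l₁]
    · exact h
  subst hm3
  refine ⟨rfl, by linarith, by nlinarith, ?_, ?_⟩
  · intro h; subst h; nlinarith
  · nlinarith
end

section
/- With the notation of the previous statement (v, V ∈ ℝ³ orthogonal with ⟨v,v⟩ = ε̂, ⟨V,V⟩ = C ≠ 0, and Ṽ the generalized cross product), for all i ≠ j one has ε̂·vᵢvⱼ + (C/|C|²)·VᵢVⱼ - (ε̂C/|C|²)·ṼᵢṼⱼ = 0. Equivalently, multiplying by εC with ε̂ε = ε̃: (c - c̃)vᵢvⱼ + ε·VᵢVⱼ = ε̃·ṼᵢṼⱼ, where C = ε̃(c - c̃). -/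
/-!
Expanding the generalized cross product `Ṽ` of two vectors orthogonal for the form
`x₁y₁ - x₂y₂ + x₃y₃` gives, off the diagonal, `ṼᵢṼⱼ = C vᵢvⱼ + ε̂ VᵢVⱼ` (a Lagrange-type identity
in signature `(2,1)`). Both claimed identities are then scalar consequences of `ε̂² = ε̃² = 1`.
-/

section LorentzCross

variable {v₁ v₂ v₃ V₁ V₂ V₃ a C : ℝ}

theorem lorentzCross_mul_lorentzCross_of_orthogonal
    (hv : v₁ * v₁ - v₂ * v₂ + v₃ * v₃ = a)
    (hvV : v₁ * V₁ - v₂ * V₂ + v₃ * V₃ = 0)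
    (hV : V₁ * V₁ - V₂ * V₂ + V₃ * V₃ = C) :
    (v₂ * V₃ - v₃ * V₂) * (v₁ * V₃ - v₃ * V₁) = C * (v₁ * v₂) + a * (V₁ * V₂) ∧
    (v₂ * V₃ - v₃ * V₂) * (v₁ * V₂ - v₂ * V₁) = C * (v₁ * v₃) + a * (V₁ * V₃) ∧
    (v₁ * V₃ - v₃ * V₁) * (v₁ * V₂ - v₂ * V₁) = C * (v₂ * v₃) + a * (V₂ * V₃) := by
  subst hv hV
  refine ⟨?_, ?_, ?_⟩
  · linear_combination (-(v₁ * V₂ + v₂ * V₁)) * hvV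
  · linear_combination (-(v₁ * V₃ + v₃ * V₁)) * hvV
  · linear_combination (-(v₂ * V₃ + v₃ * V₂)) * hvV

end LorentzCross

theorem sign_mul_add_div_abs_sq_sub_eq_zero {εh C x y : ℝ} (hεh : εh * εh = 1) (hC : C ≠ 0) :
    εh * x + C / |C| ^ 2 * y - εh * C / |C| ^ 2 * (C * x + εh * y) = 0 := by
  rw [sq_abs]
  field_simp
  linear_combination (-y) * hεh

theorem sub_mul_add_sign_mul_eq {εh ε εt C c ct x y : ℝ} (hεh : εh * εh = 1)
    (hεt : εt * εt = 1) (hee : εh * ε = εt) (hCdef : C = εt * (c - ct)) :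
    (c - ct) * x + ε * y = εt * (C * x + εh * y) := by
  subst hCdef hee
  linear_combination (-(c - ct) * x) * hεt - ε * y * hεh

theorem stmt_15_general (v₁ v₂ v₃ V₁ V₂ V₃ C εh ε εt c ct : ℝ)
    (hεh : εh = 1 ∨ εh = -1) (hεt : εt = 1 ∨ εt = -1)
    (hee : εh * ε = εt) (hCdef : C = εt * (c - ct)) (hC : C ≠ 0)
    (hv : v₁ * v₁ - v₂ * v₂ + v₃ * v₃ = εh)
    (hvV : v₁ * V₁ - v₂ * V₂ + v₃ * V₃ = 0)
    (hV : V₁ * V₁ - V₂ * V₂ + V₃ * V₃ = C) :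
    let W₁ := (v₂ * V₃ - v₃ * V₂)
    let W₂ := -(-1) * (v₁ * V₃ - v₃ * V₁)
    let W₃ := (v₁ * V₂ - v₂ * V₁)
    (εh * (v₁ * v₂) + C / |C| ^ 2 * (V₁ * V₂) - εh * C / |C| ^ 2 * (W₁ * W₂) = 0 ∧
     εh * (v₁ * v₃) + C / |C| ^ 2 * (V₁ * V₃) - εh * C / |C| ^ 2 * (W₁ * W₃) = 0 ∧
     εh * (v₂ * v₃) + C / |C| ^ 2 * (V₂ * V₃) - εh * C / |C| ^ 2 * (W₂ * W₃) = 0) ∧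
    ((c - ct) * (v₁ * v₂) + ε * (V₁ * V₂) = εt * (W₁ * W₂) ∧
     (c - ct) * (v₁ * v₃) + ε * (V₁ * V₃) = εt * (W₁ * W₃) ∧
     (c - ct) * (v₂ * v₃) + ε * (V₂ * V₃) = εt * (W₂ * W₃)) := by
  intro W₁ W₂ W₃
  obtain ⟨h₁₂, h₁₃, h₂₃⟩ := lorentzCross_mul_lorentzCross_of_orthogonal hv hvV hV
  have hεh₂ : εh * εh = 1 := mul_self_eq_one_iff.mpr hεh
  have hεt₂ : εt * εt = 1 := mul_self_eq_one_iff.mpr hεt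
  simp only [W₁, W₂, W₃, neg_neg, one_mul, h₁₂, h₁₃, h₂₃]
  exact ⟨⟨sign_mul_add_div_abs_sq_sub_eq_zero hεh₂ hC, sign_mul_add_div_abs_sq_sub_eq_zero hεh₂ hC,
      sign_mul_add_div_abs_sq_sub_eq_zero hεh₂ hC⟩,
    sub_mul_add_sign_mul_eq hεh₂ hεt₂ hee hCdef, sub_mul_add_sign_mul_eq hεh₂ hεt₂ hee hCdef,
    sub_mul_add_sign_mul_eq hεh₂ hεt₂ hee hCdef⟩

/-- Off-diagonal identities from the proof of Theorem 5: with `v, V` orthogonal for the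
signature `(2,1)` product, `⟨v,v⟩ = ε̂`, `⟨V,V⟩ = C ≠ 0`, and `Ṽ` the generalized cross
product, for all `i ≠ j` one has `ε̂ vᵢ vⱼ + (C/|C|²) Vᵢ Vⱼ - (ε̂ C/|C|²) Ṽᵢ Ṽⱼ = 0`;
equivalently, with `ε̂ ε = ε̃` and `C = ε̃ (c - c̃)`,
`(c - c̃) vᵢ vⱼ + ε Vᵢ Vⱼ = ε̃ Ṽᵢ Ṽⱼ`. -/
theorem stmt_15 (v₁ v₂ v₃ V₁ V₂ V₃ C εh ε εt c ct : ℝ)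
    (hεh : εh = 1 ∨ εh = -1) (hε : ε = 1 ∨ ε = -1) (hεt : εt = 1 ∨ εt = -1)
    (hee : εh * ε = εt) (hcct : c ≠ ct) (hCdef : C = εt * (c - ct)) (hC : C ≠ 0)
    (hv : v₁ * v₁ - v₂ * v₂ + v₃ * v₃ = εh)
    (hvV : v₁ * V₁ - v₂ * V₂ + v₃ * V₃ = 0)
    (hV : V₁ * V₁ - V₂ * V₂ + V₃ * V₃ = C) :
    let W₁ := (v₂ * V₃ - v₃ * V₂)
    let W₂ := -(-1) * (v₁ * V₃ - v₃ * V₁)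
    let W₃ := (v₁ * V₂ - v₂ * V₁)
    (εh * (v₁ * v₂) + C / |C| ^ 2 * (V₁ * V₂) - εh * C / |C| ^ 2 * (W₁ * W₂) = 0 ∧
     εh * (v₁ * v₃) + C / |C| ^ 2 * (V₁ * V₃) - εh * C / |C| ^ 2 * (W₁ * W₃) = 0 ∧
     εh * (v₂ * v₃) + C / |C| ^ 2 * (V₂ * V₃) - εh * C / |C| ^ 2 * (W₂ * W₃) = 0) ∧
    ((c - ct) * (v₁ * v₂) + ε * (V₁ * V₂) = εt * (W₁ * W₂) ∧
     (c - ct) * (v₁ * v₃) + ε * (V₁ * V₃) = εt * (W₁ * W₃) ∧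
     (c - ct) * (v₂ * v₃) + ε * (V₂ * V₃) = εt * (W₂ * W₃)) :=
  stmt_15_general v₁ v₂ v₃ V₁ V₂ V₃ C εh ε εt c ct hεh hεt hee hCdef hC hv hvV hV
end

section
/- Let T: V → V be a self-adjoint endomorphism of a 3-dimensional real inner product space with distinct eigenvalues λ₁ < λ₂ < λ₃ and eigenvectors e₁, e₂, e₃, and let S be another self-adjoint endomorphism diagonalized by the same basis with eigenvalues μⱼ. If (λⱼ - λₖ)·aᵢⱼₖ = (λᵢ - λₖ)·bᵢⱼₖ and (μⱼ - μₖ)·aᵢⱼₖ = (μᵢ - μₖ)·bᵢⱼₖ hold for real numbers aᵢⱼₖ, bᵢⱼₖ (for all distinct i,j,k), and moreover μⱼμₖ = C + ε̂λⱼλₖ for all j ≠ k with C ≠ 0, all μⱼ nonzero and C + ε̂λᵢλₖ ≠ 0, then aᵢⱼₖ = 0 for all distinct i, j, k. -/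
/-!
Multiply the second Codazzi relation by `μⱼ`. The products `μⱼμₖ` and `μᵢμⱼ` are given by
`μⱼμₖ = C + ε λⱼλₖ`, and `μⱼ² (C + ε λᵢλₖ) = (C + ε λᵢλⱼ)(C + ε λⱼλₖ)`, so after clearing the
factor `C + ε λᵢλₖ` the relation only involves the `λ`'s. Eliminating `bᵢⱼₖ` with the first
relation leaves `ε C (λᵢ - λⱼ)(λⱼ - λₖ) aᵢⱼₖ = 0`.
-/

section CodazziRelations

variable {R : Type*} [CommRing R] {ε C li lj lk mi mj mk a b : R}

theorem mul_self_mul_eq_of_mul_eq (hij : mi * mj = C + ε * li * lj)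
    (hjk : mj * mk = C + ε * lj * lk) (hik : mi * mk = C + ε * li * lk) :
    mj * mj * (C + ε * li * lk) = (C + ε * li * lj) * (C + ε * lj * lk) := by
  linear_combination (-(mj * mj)) * hik + (mj * mk) * hij + (C + ε * li * lj) * hjk

theorem codazzi_mul_eq_zero (hij : mi * mj = C + ε * li * lj)
    (hjk : mj * mk = C + ε * lj * lk) (hik : mi * mk = C + ε * li * lk)
    (h₁ : (lj - lk) * a = (li - lk) * b) (h₂ : (mj - mk) * a = (mi - mk) * b) :
    ε * C * (li - lj) * (lj - lk) * a = 0 := by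
  linear_combination (-a) * mul_self_mul_eq_of_mul_eq hij hjk hik
    + (mj * (C + ε * li * lk)) * h₂ + (-(ε * lj * (C + ε * li * lk))) * h₁
    + ((C + ε * li * lk) * b) * hij + ((C + ε * li * lk) * (a - b)) * hjk

end CodazziRelations

theorem eq_zero_of_codazzi {R : Type*} [CommRing R] [NoZeroDivisors R]
    {ε C li lj lk mi mj mk a b : R}
    (hε : ε ≠ 0) (hC : C ≠ 0) (hlij : li ≠ lj) (hljk : lj ≠ lk)
    (hij : mi * mj = C + ε * li * lj) (hjk : mj * mk = C + ε * lj * lk)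
    (hik : mi * mk = C + ε * li * lk)
    (h₁ : (lj - lk) * a = (li - lk) * b) (h₂ : (mj - mk) * a = (mi - mk) * b) :
    a = 0 := by
  have hcoeff : ε * C * (li - lj) * (lj - lk) ≠ 0 :=
    mul_ne_zero (mul_ne_zero (mul_ne_zero hε hC) (sub_ne_zero.mpr hlij)) (sub_ne_zero.mpr hljk)
  exact (mul_eq_zero.mp (codazzi_mul_eq_zero hij hjk hik h₁ h₂)).resolve_left hcoeff

theorem stmt_16_general
    (lam mu : Fin 3 → ℝ)
    (hord : ∀ i j : Fin 3, i < j → lam i < lam j)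
    (a b : Fin 3 → Fin 3 → Fin 3 → ℝ)
    (εh C : ℝ) (hεh : εh = 1 ∨ εh = -1) (hC : C ≠ 0)
    (hmuprod : ∀ j k, j ≠ k → mu j * mu k = C + εh * lam j * lam k)
    (hrel1 : ∀ i j k, i ≠ j → j ≠ k → i ≠ k →
      (lam j - lam k) * a i j k = (lam i - lam k) * b i j k)
    (hrel2 : ∀ i j k, i ≠ j → j ≠ k → i ≠ k →
      (mu j - mu k) * a i j k = (mu i - mu k) * b i j k) :
    ∀ i j k, i ≠ j → j ≠ k → i ≠ k → a i j k = 0 := by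
  intro i j k hij hjk hik
  have hlam : Function.Injective lam := StrictMono.injective hord
  have hε : εh ≠ 0 := by rcases hεh with rfl | rfl <;> norm_num
  exact eq_zero_of_codazzi hε hC (hlam.ne hij) (hlam.ne hjk)
    (hmuprod i j hij) (hmuprod j k hjk) (hmuprod i k hik)
    (hrel1 i j k hij hjk hik) (hrel2 i j k hij hjk hik)

/-- Abstract form of the step `⟨∇_{eᵢ}eⱼ, eₖ⟩ = 0` in the proof of Theorem 5: two
self-adjoint endomorphisms `T, S` of a 3-dimensional real inner product space are
simultaneously diagonalized by a basis `e` with eigenvalues `λ₁ < λ₂ < λ₃` and `μⱼ`;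
if the Codazzi-type relations `(λⱼ - λₖ) aᵢⱼₖ = (λᵢ - λₖ) bᵢⱼₖ` and
`(μⱼ - μₖ) aᵢⱼₖ = (μᵢ - μₖ) bᵢⱼₖ` hold for all distinct `i, j, k`, and moreover
`μⱼ μₖ = C + ε̂ λⱼ λₖ` for `j ≠ k` with `C ≠ 0`, all `μⱼ ≠ 0` and
`C + ε̂ λᵢ λₖ ≠ 0`, then `aᵢⱼₖ = 0` for all distinct `i, j, k`. -/
theorem stmt_16 {V : Type*} [NormedAddCommGroup V] [InnerProductSpace ℝ V]
    (hdim : Module.finrank ℝ V = 3)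
    (T S : V →ₗ[ℝ] V) (hT : T.IsSymmetric) (hS : S.IsSymmetric)
    (e : Fin 3 → V) (he : ∀ j, e j ≠ 0)
    (lam mu : Fin 3 → ℝ)
    (hTe : ∀ j, T (e j) = lam j • e j) (hSe : ∀ j, S (e j) = mu j • e j)
    (hord : ∀ i j : Fin 3, i < j → lam i < lam j)
    (a b : Fin 3 → Fin 3 → Fin 3 → ℝ)
    (εh C : ℝ) (hεh : εh = 1 ∨ εh = -1) (hC : C ≠ 0)
    (hmu0 : ∀ j, mu j ≠ 0)
    (hmuprod : ∀ j k, j ≠ k → mu j * mu k = C + εh * lam j * lam k)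
    (hCn : ∀ i k, i ≠ k → C + εh * lam i * lam k ≠ 0)
    (hrel1 : ∀ i j k, i ≠ j → j ≠ k → i ≠ k →
      (lam j - lam k) * a i j k = (lam i - lam k) * b i j k)
    (hrel2 : ∀ i j k, i ≠ j → j ≠ k → i ≠ k →
      (mu j - mu k) * a i j k = (mu i - mu k) * b i j k) :
    ∀ i j k, i ≠ j → j ≠ k → i ≠ k → a i j k = 0 :=
  stmt_16_general lam mu hord a b εh C hεh hC hmuprod hrel1 hrel2
end
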